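/- arXiv:1603.09510 — 7 statements merged into one kernel-verified Lean document; each statement's English description precedes it below -/
import Mathlib

section
/- Let G be a Polish group and let A be a subset of G. Then A is Haar meager if and only if there exist a Borel set B ⊆ G with A ⊆ B and a continuous map f : 2^ℕ → G from the Cantor space 2^ℕ such that f⁻¹(g·B·h) is meager in 2^ℕ for every g, h ∈ G. -/
open MeasureTheory
/-- `A` is Haar meager: there are a Borel set `B ⊇ A`, a nonempty compact metric space `K`
and a continuous `f : K → G` such that `f⁻¹(g·B·h)` is meager in `K` for all `g, h`. -/
def IsHaarMeager {G : Type} [Group G] [TopologicalSpace G] (A : Set G) : Prop :=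
  ∃ B : Set G, MeasurableSet[borel G] B ∧ A ⊆ B ∧
    ∃ (K : Type) (_ : MetricSpace K) (_ : CompactSpace K) (_ : Nonempty K) (f : K → G),
      Continuous f ∧ ∀ g h : G, IsMeagre (f ⁻¹' ((fun b => g * b * h) '' B))

/-!
The Cantor space is itself a nonempty compact metric space, so only the forward direction has
content. For it, every nonempty compact metric space `K` admits a continuous `ψ : 2^ℕ → K` such that
the image of every nonempty open set has nonempty interior; the preimage of a nowhere dense set
under such a map is nowhere dense, so `ψ` pulls meagre sets back to meagre sets and `f ∘ ψ` is a
Cantor witness. The map `ψ` is read off a Cantor scheme of nonempty regular closed sets: each set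
is covered by finitely many regular closed pieces of small radius, the pieces have nonempty
interior, and every point of a piece lies on a branch through it.
-/

open Set Metric

section QuasiOpen

variable {X Y : Type*} [TopologicalSpace X] [TopologicalSpace Y] {f : X → Y}

theorem IsNowhereDense.preimage_of_nonempty_interior_image (hf : Continuous f)
    (hfU : ∀ U : Set X, IsOpen U → U.Nonempty → (interior (f '' U)).Nonempty)
    {s : Set Y} (hs : IsNowhereDense s) : IsNowhereDense (f ⁻¹' s) := by
  by_contra h
  obtain ⟨y, hy⟩ := hfU _ isOpen_interior (nonempty_iff_ne_empty.2 h)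
  have hsub : f '' interior (closure (f ⁻¹' s)) ⊆ closure s :=
    image_subset_iff.2 (interior_subset.trans (hf.closure_preimage_subset s))
  have : y ∈ interior (closure s) := interior_mono hsub hy
  rw [hs] at this
  exact this

theorem IsMeagre.preimage_of_nonempty_interior_image (hf : Continuous f)
    (hfU : ∀ U : Set X, IsOpen U → U.Nonempty → (interior (f '' U)).Nonempty)
    {s : Set Y} (hs : IsMeagre s) : IsMeagre (f ⁻¹' s) := by
  obtain ⟨S, hS, hSc, hsS⟩ := isMeagre_iff_countable_union_isNowhereDense.1 hs
  refine (isMeagre_biUnion hSc fun t ht =>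
    ((hS t ht).preimage_of_nonempty_interior_image hf hfU).isMeagre).mono ?_
  rw [← preimage_iUnion₂, ← sUnion_eq_biUnion]
  exact preimage_mono hsS

end QuasiOpen

section RegularClosed

variable {X : Type*} [TopologicalSpace X]

def IsRegularClosed (C : Set X) : Prop := closure (interior C) = C

theorem IsOpen.isRegularClosed_closure {U : Set X} (hU : IsOpen U) :
    IsRegularClosed (closure U) :=
  (isClosed_closure.closure_interior_subset).antisymm
    (closure_mono hU.subset_interior_closure)

theorem IsRegularClosed.isClosed {C : Set X} (hC : IsRegularClosed C) : IsClosed C :=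
  hC ▸ isClosed_closure

theorem IsRegularClosed.interior_nonempty {C : Set X} (hC : IsRegularClosed C)
    (hne : C.Nonempty) : (interior C).Nonempty := by
  rw [nonempty_iff_ne_empty] at hne ⊢
  exact fun h => hne (by rw [← hC, h, closure_empty])

theorem isRegularClosed_univ : IsRegularClosed (univ : Set X) := by
  simp [IsRegularClosed]

/-- Pieces are closures of `ball u ε ∩ interior C`, with centres `u` taken in `interior C` so that
they are nonempty. -/
theorem IsRegularClosed.exists_finite_cover_closedBall {K : Type*} [PseudoMetricSpace K]
    {C : Set K} (hC : IsRegularClosed C) (hCc : IsCompact C) {ε : ℝ} (hε : 0 < ε) :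
    ∃ S : Set (Set K), S.Finite ∧ (∀ P ∈ S, IsRegularClosed P ∧ P.Nonempty ∧ P ⊆ C ∧
      ∃ u, P ⊆ closedBall u ε) ∧ C ⊆ ⋃₀ S := by
  have hcov : C ⊆ ⋃ u ∈ interior C, ball u ε := by
    intro y hy
    rw [← hC] at hy
    obtain ⟨u, hu, hyu⟩ := Metric.mem_closure_iff.1 hy ε hε
    exact mem_iUnion₂.2 ⟨u, hu, mem_ball.2 hyu⟩
  obtain ⟨t, htC, htf, hcovt⟩ := hCc.elim_finite_subcover_image (fun _ _ => isOpen_ball) hcov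
  set piece : K → Set K := fun u => closure (ball u ε ∩ interior C)
  refine ⟨piece '' t, htf.image piece, ?_, ?_⟩
  · rintro _ ⟨u, hu, rfl⟩
    refine ⟨(isOpen_ball.inter isOpen_interior).isRegularClosed_closure,
      ⟨u, subset_closure ⟨mem_ball_self hε, htC hu⟩⟩,
      closure_minimal (inter_subset_right.trans interior_subset) hC.isClosed,
      u, closure_minimal (inter_subset_left.trans ball_subset_closedBall) isClosed_closedBall⟩
  · have hint : interior C ⊆ ⋃ u ∈ t, piece u := by
      intro y hy
      obtain ⟨u, hu, hyu⟩ := mem_iUnion₂.1 (hcovt (interior_subset hy))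
      exact mem_iUnion₂.2 ⟨u, hu, subset_closure ⟨hyu, hy⟩⟩
    rw [sUnion_image, ← hC]
    exact closure_minimal hint (htf.isClosed_biUnion fun _ _ => isClosed_closure)

end RegularClosed

namespace CantorScheme

variable {K : Type*} [MetricSpace K] [CompactSpace K]

open PiNat

open Classical in
noncomputable def refinement (C : Set K) (n : ℕ) : List (Set K) :=
  if hC : IsRegularClosed C then
    (hC.exists_finite_cover_closedBall hC.isClosed.isCompact
      (pow_pos (by norm_num : (0 : ℝ) < 2⁻¹) n)).choose_spec.1.toFinset.toList
  else []

theorem refinement_spec {C : Set K} (hC : IsRegularClosed C) (n : ℕ) :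
    (∀ P ∈ refinement C n, IsRegularClosed P ∧ P.Nonempty ∧ P ⊆ C ∧
      ∃ u, P ⊆ closedBall u (2⁻¹ ^ n)) ∧ C ⊆ ⋃ P ∈ refinement C n, P := by
  have h := hC.exists_finite_cover_closedBall hC.isClosed.isCompact
    (pow_pos (by norm_num : (0 : ℝ) < 2⁻¹) n)
  simp only [refinement, dif_pos hC, Finset.mem_toList, Set.Finite.mem_toFinset]
  exact ⟨h.choose_spec.2.1, sUnion_eq_biUnion ▸ h.choose_spec.2.2⟩

/-- A finite cover is searched in unary: while the list has several sets, bit `false` selects its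
head and `true` discards it; a single set is refined at radius `2⁻¹ ^ n`. -/
noncomputable def step (n : ℕ) (b : Bool) : List (Set K) → List (Set K)
  | [] => []
  | [P] => refinement P n
  | P :: Q :: L => if b then Q :: L else [P]

theorem mem_step {L : List (Set K)} (hL : ∀ P ∈ L, IsRegularClosed P ∧ P.Nonempty) {n : ℕ}
    {b : Bool} {P' : Set K} (hP' : P' ∈ step n b L) :
    IsRegularClosed P' ∧ P'.Nonempty ∧ ∃ P ∈ L, P' ⊆ P := by
  match L, hP' with
  | [P], hP' =>
    obtain ⟨h₁, h₂, h₃, -⟩ := (refinement_spec (hL P (by simp)).1 n).1 P' hP'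
    exact ⟨h₁, h₂, P, by simp, h₃⟩
  | P :: Q :: M, hP' =>
    have hsub : step n b (P :: Q :: M) ⊆ P :: Q :: M := by cases b <;> simp [step]
    exact ⟨(hL P' (hsub hP')).1, (hL P' (hsub hP')).2, P', hsub hP', subset_rfl⟩

theorem step_ne_nil {L : List (Set K)} (hL : ∀ P ∈ L, IsRegularClosed P ∧ P.Nonempty)
    (hne : L ≠ []) (n : ℕ) (b : Bool) : step n b L ≠ [] := by
  match L with
  | [P] =>
    obtain ⟨y, hy⟩ := (hL P (by simp)).2
    obtain ⟨Q, hQ, -⟩ := mem_iUnion₂.1 ((refinement_spec (hL P (by simp)).1 n).2 hy)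
    exact List.ne_nil_of_mem hQ
  | P :: Q :: M => cases b <;> simp [step]

theorem exists_mem_step {L : List (Set K)} (hL : ∀ P ∈ L, IsRegularClosed P) (n : ℕ) {y : K}
    (hy : y ∈ ⋃ P ∈ L, P) : ∃ b, y ∈ ⋃ P ∈ step n b L, P := by
  match L with
  | [] => simp at hy
  | [P] => exact ⟨true, (refinement_spec (hL P (by simp)) n).2 (by simpa using hy)⟩
  | P :: Q :: M =>
    obtain ⟨R, hR, hyR⟩ := mem_iUnion₂.1 hy
    rcases List.mem_cons.1 hR with rfl | hR
    · exact ⟨false, mem_iUnion₂.2 ⟨R, by simp [step], hyR⟩⟩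
    · exact ⟨true, mem_iUnion₂.2 ⟨R, by simpa [step] using hR, hyR⟩⟩

noncomputable def node (x : ℕ → Bool) : ℕ → List (Set K)
  | 0 => [univ]
  | n + 1 => step n (x n) (node x n)

def cell (x : ℕ → Bool) (n : ℕ) : Set K := ⋃ P ∈ node x n, P

theorem node_eq_of_mem_cylinder {x y : ℕ → Bool} {n : ℕ} (h : y ∈ cylinder x n) :
    node (K := K) y n = node x n := by
  induction n with
  | zero => rfl
  | succ n ih =>
    rw [node, node, ih (cylinder_anti x n.le_succ h), h n n.lt_succ_self]

theorem isLocallyConstant_node (n : ℕ) : IsLocallyConstant fun x => node (K := K) x n :=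
  (IsLocallyConstant.iff_eventually_eq _).2 fun x =>
    Filter.mem_of_superset ((isOpen_cylinder _ x n).mem_nhds (self_mem_cylinder x n))
      fun _ => node_eq_of_mem_cylinder

variable [Nonempty K]

theorem mem_node {x : ℕ → Bool} {n : ℕ} {P : Set K} (hP : P ∈ node x n) :
    IsRegularClosed P ∧ P.Nonempty := by
  induction n generalizing P with
  | zero =>
    rw [node, List.mem_singleton] at hP
    exact hP ▸ ⟨isRegularClosed_univ, univ_nonempty⟩
  | succ n ih => exact ⟨(mem_step (fun _ => ih) hP).1, (mem_step (fun _ => ih) hP).2.1⟩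

theorem node_ne_nil (x : ℕ → Bool) (n : ℕ) : node (K := K) x n ≠ [] := by
  induction n with
  | zero => simp [node]
  | succ n ih => exact step_ne_nil (fun _ => mem_node) ih n (x n)

theorem exists_superset_mem_node {x : ℕ → Bool} {m k : ℕ} (hmk : m ≤ k) {P : Set K}
    (hP : P ∈ node x k) : ∃ Q ∈ node x m, P ⊆ Q := by
  induction k, hmk using Nat.le_induction generalizing P with
  | base => exact ⟨P, hP, subset_rfl⟩
  | succ k _ ih =>
    obtain ⟨Q, hQ, hPQ⟩ := (mem_step (fun _ => mem_node) hP).2.2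
    obtain ⟨R, hR, hQR⟩ := ih hQ
    exact ⟨R, hR, hPQ.trans hQR⟩

theorem cell_anti (x : ℕ → Bool) : Antitone (cell (K := K) x) := fun m k hmk y hy => by
  obtain ⟨P, hP, hyP⟩ := mem_iUnion₂.1 hy
  obtain ⟨Q, hQ, hPQ⟩ := exists_superset_mem_node hmk hP
  exact mem_iUnion₂.2 ⟨Q, hQ, hPQ hyP⟩

theorem isClosed_cell (x : ℕ → Bool) (n : ℕ) : IsClosed (cell (K := K) x n) :=
  (node x n).finite_toSet.isClosed_biUnion fun _ hP => (mem_node hP).1.isClosed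

theorem cell_nonempty (x : ℕ → Bool) (n : ℕ) : (cell (K := K) x n).Nonempty := by
  obtain ⟨P, hP⟩ := List.exists_mem_of_ne_nil _ (node_ne_nil (K := K) x n)
  obtain ⟨y, hy⟩ := (mem_node hP).2
  exact ⟨y, mem_iUnion₂.2 ⟨P, hP, hy⟩⟩

/-- While the list has several sets it strictly shrinks. -/
theorem exists_node_eq_singleton (x : ℕ → Bool) (n : ℕ) :
    ∃ m ≥ n, ∃ P, node (K := K) x m = [P] := by
  induction h : (node (K := K) x n).length using Nat.strong_induction_on generalizing n with
  | _ l ih =>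
  match hL : node (K := K) x n with
  | [] => exact absurd hL (node_ne_nil x n)
  | [P] => exact ⟨n, le_rfl, P, hL⟩
  | P :: Q :: M =>
    have hstep : node (K := K) x (n + 1) = if x n then Q :: M else [P] := by rw [node, hL]; rfl
    cases hb : x n
    · exact ⟨n + 1, n.le_succ, P, by simp [hstep, hb]⟩
    · obtain ⟨m, hm, R, hR⟩ :=
        ih (Q :: M).length (by simp [← h, hL]) (n + 1) (by simp [hstep, hb])
      exact ⟨m, by omega, R, hR⟩

/-- After a singleton at stage `m`, every later set lies in one piece of radius `2⁻¹ ^ m`; once the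
list is a singleton again, the whole cell does. -/
theorem exists_dist_le_of_mem_cell (x : ℕ → Bool) {ε : ℝ} (hε : 0 < ε) :
    ∃ n, ∀ y ∈ cell (K := K) x n, ∀ z ∈ cell x n, dist y z ≤ ε := by
  obtain ⟨j, hj⟩ := exists_pow_lt_of_lt_one (half_pos hε) (by norm_num : (2⁻¹ : ℝ) < 1)
  obtain ⟨m, hjm, P, hP⟩ := exists_node_eq_singleton (K := K) x j
  obtain ⟨k, hmk, R, hR⟩ := exists_node_eq_singleton (K := K) x (m + 1)
  obtain ⟨Q, hQ, hRQ⟩ := exists_superset_mem_node hmk (hR ▸ List.mem_singleton_self R)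
  rw [node, hP] at hQ
  obtain ⟨u, hu⟩ :=
    ((refinement_spec (mem_node (hP ▸ List.mem_singleton_self P)).1 m).1 Q hQ).2.2.2
  have hr : (2⁻¹ : ℝ) ^ m ≤ ε / 2 :=
    (pow_le_pow_of_le_one (by norm_num) (by norm_num) hjm).trans hj.le
  have hcell : cell x k ⊆ closedBall u (2⁻¹ ^ m) := by
    simpa [cell, hR] using hRQ.trans hu
  refine ⟨k, fun y hy z hz => ?_⟩
  calc dist y z ≤ diam (closedBall u (2⁻¹ ^ m)) :=
        dist_le_diam_of_mem isBounded_closedBall (hcell hy) (hcell hz)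
    _ ≤ 2 * 2⁻¹ ^ m := diam_closedBall (by positivity)
    _ ≤ ε := by linarith

theorem iInter_cell_nonempty (x : ℕ → Bool) : (⋂ n, cell (K := K) x n).Nonempty :=
  IsCompact.nonempty_iInter_of_sequence_nonempty_isCompact_isClosed _
    (fun n => cell_anti x n.le_succ) (cell_nonempty x) (isClosed_cell x 0).isCompact
    (isClosed_cell x)

noncomputable def point (x : ℕ → Bool) : K := (iInter_cell_nonempty x).some

theorem point_mem_cell (x : ℕ → Bool) (n : ℕ) : point x ∈ cell (K := K) x n :=
  mem_iInter.1 (iInter_cell_nonempty x).some_mem n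

theorem eq_point_of_forall_mem_cell {x : ℕ → Bool} {y : K} (hy : ∀ n, y ∈ cell x n) :
    y = point x :=
  eq_of_forall_dist_le fun _ hε =>
    have ⟨n, hn⟩ := exists_dist_le_of_mem_cell (K := K) x hε
    hn y (hy n) (point x) (point_mem_cell x n)

theorem continuous_point : Continuous (point (K := K)) := by
  refine continuous_iff_continuousAt.2 fun x => Metric.tendsto_nhds.2 fun ε hε => ?_
  obtain ⟨n, hn⟩ := exists_dist_le_of_mem_cell (K := K) x (half_pos hε)
  filter_upwards [(isOpen_cylinder _ x n).mem_nhds (self_mem_cylinder x n)] with y hy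
  have hy' : point y ∈ cell (K := K) x n := by
    rw [cell, ← node_eq_of_mem_cylinder hy]
    exact point_mem_cell y n
  exact (hn _ hy' _ (point_mem_cell x n)).trans_lt (half_lt_self hε)

theorem exists_mem_cylinder_mem_cell {x : ℕ → Bool} {n : ℕ} {y : K} (hy : y ∈ cell x n)
    (k : ℕ) : ∃ z ∈ cylinder x n, y ∈ cell z (n + k) := by
  induction k with
  | zero => exact ⟨x, self_mem_cylinder x n, hy⟩
  | succ k ih =>
    obtain ⟨z, hz, hyz⟩ := ih
    obtain ⟨b, hb⟩ := exists_mem_step (fun _ hP => (mem_node hP).1) (n + k) hyz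
    have hz' : Function.update z (n + k) b ∈ cylinder z (n + k) := fun i hi =>
      Function.update_of_ne (by omega) _ _
    refine ⟨Function.update z (n + k) b, fun i hi => (hz' i (by omega)).trans (hz i hi), ?_⟩
    rw [cell, ← add_assoc, node, node_eq_of_mem_cylinder hz', Function.update_self]
    exact hb

/-- The branches through `y` of length `n + k` form a decreasing sequence of nonempty closed sets
in the compact space `2^ℕ`. -/
theorem cell_subset_image_cylinder (x : ℕ → Bool) (n : ℕ) :
    cell (K := K) x n ⊆ point '' cylinder x n := by
  intro y hy
  set F : ℕ → Set (ℕ → Bool) := fun k => cylinder x n ∩ {z | y ∈ cell z (n + k)}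
  have hF_closed (k : ℕ) : IsClosed (F k) :=
    (cylinder_eq_pi x n ▸ isClosed_set_pi fun _ _ => isClosed_discrete _).inter
      (isOpen_compl_iff.1 (isLocallyConstant_node (n + k) {L | y ∈ ⋃ P ∈ L, P}ᶜ))
  obtain ⟨z, hz⟩ := IsCompact.nonempty_iInter_of_sequence_nonempty_isCompact_isClosed F
    (fun k => inter_subset_inter_right _ fun _ h => cell_anti _ (n + k).le_succ h)
    (fun k => exists_mem_cylinder_mem_cell hy k) (hF_closed 0).isCompact hF_closed
  have hz' (k : ℕ) : z ∈ F k := mem_iInter.1 hz k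
  exact ⟨z, (hz' 0).1, (eq_point_of_forall_mem_cell fun m =>
    cell_anti z (m.le_add_left n) (hz' m).2).symm⟩

theorem nonempty_interior_image_point {U : Set (ℕ → Bool)} (hU : IsOpen U) (hne : U.Nonempty) :
    (interior (point (K := K) '' U)).Nonempty := by
  obtain ⟨x, hx⟩ := hne
  obtain ⟨_, ⟨x', n, rfl⟩, -, hcU⟩ :=
    (isTopologicalBasis_cylinders _).exists_subset_of_mem_open hx hU
  obtain ⟨P, hP⟩ := List.exists_mem_of_ne_nil _ (node_ne_nil (K := K) x' n)
  have hPU : P ⊆ point '' U := fun y hy =>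
    image_mono hcU (cell_subset_image_cylinder x' n (mem_iUnion₂.2 ⟨P, hP, hy⟩))
  exact ((mem_node hP).1.interior_nonempty (mem_node hP).2).mono (interior_mono hPU)

end CantorScheme

theorem exists_continuous_isMeagre_preimage_of_compactSpace (K : Type*) [MetricSpace K]
    [CompactSpace K] [Nonempty K] :
    ∃ ψ : (ℕ → Bool) → K, Continuous ψ ∧ ∀ M : Set K, IsMeagre M → IsMeagre (ψ ⁻¹' M) :=
  ⟨CantorScheme.point, CantorScheme.continuous_point, fun _ hM =>
    hM.preimage_of_nonempty_interior_image CantorScheme.continuous_point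
      fun _ => CantorScheme.nonempty_interior_image_point⟩

theorem haarMeager_iff_cantor_witness_general {G : Type} [Group G] [TopologicalSpace G] (A : Set G) :
    IsHaarMeager A ↔
      ∃ B : Set G, MeasurableSet[borel G] B ∧ A ⊆ B ∧
        ∃ f : (ℕ → Bool) → G, Continuous f ∧
          ∀ g h : G, IsMeagre (f ⁻¹' ((fun b => g * b * h) '' B)) := by
  constructor
  · rintro ⟨B, hB, hAB, K, _, _, _, f, hf, hmeagre⟩
    obtain ⟨ψ, hψ, hψ_meagre⟩ := exists_continuous_isMeagre_preimage_of_compactSpace K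
    exact ⟨B, hB, hAB, f ∘ ψ, hf.comp hψ, fun g h => hψ_meagre _ (hmeagre g h)⟩
  · rintro ⟨B, hB, hAB, f, hf, hmeagre⟩
    let := TopologicalSpace.metrizableSpaceMetric (ℕ → Bool)
    exact ⟨B, hB, hAB, ℕ → Bool, inferInstance, inferInstance, inferInstance, f, hf, hmeagre⟩

theorem haarMeager_iff_cantor_witness {G : Type} [Group G] [TopologicalSpace G]
    [IsTopologicalGroup G] [PolishSpace G] (A : Set G) :
    IsHaarMeager A ↔
      ∃ B : Set G, MeasurableSet[borel G] B ∧ A ⊆ B ∧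
        ∃ f : (ℕ → Bool) → G, Continuous f ∧
          ∀ g h : G, IsMeagre (f ⁻¹' ((fun b => g * b * h) '' B)) :=
  haarMeager_iff_cantor_witness_general A
end

section
/- Let G be a Polish group. Then for every Polish space Z and every Borel set A ⊆ Z × C(2^ℕ, G) × G, the set {(z, f) ∈ Z × C(2^ℕ, G) : f⁻¹(A_{z,f}) is meager in 2^ℕ} is a Borel subset of Z × C(2^ℕ, G), where A_{z,f} = {g ∈ G : (z, f, g) ∈ A}. (That is, the map assigning to f ∈ C(2^ℕ, G) the collection {B ⊆ G : f⁻¹(B) is meager in 2^ℕ} is Borel on Borel.) -/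
open MeasureTheory Set TopologicalSpace Filter

/-! The map `((z, f), x) ↦ (z, f, f x)` is continuous, so the set in question is the set of `p`
whose section `B_p ⊆ 2^ℕ` of a Borel set `B ⊆ (Z × C(2^ℕ, G)) × 2^ℕ` is meagre. For any
Borel `B ⊆ X × Y` with `Y` second countable and Baire this set is Borel (Kechris 16.1):
by induction on `B` one shows that `{x | V ∩ B_x is meagre}` is Borel for every open `V`.
For open `B` it is the complement of the open set `{x | V ∩ B_x ≠ ∅}`. For complements,
a set `S` with the Baire property is meagre in `V` iff `W \ S` is non-meagre for every
nonempty basic open `W ⊆ V`, which turns `{x | V ∩ (Bᶜ)_x is meagre}` into a countable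
intersection of the complements of the sets `{x | W ∩ B_x is meagre}`. Countable unions
are immediate. -/

section

variable {X Y : Type*} [TopologicalSpace X] [TopologicalSpace Y]

theorem IsOpen.isMeagre_iff_eq_empty [BaireSpace Y] {s : Set Y} (hs : IsOpen s) :
    IsMeagre s ↔ s = ∅ := by
  refine ⟨fun h => ?_, fun h => h ▸ IsMeagre.empty⟩
  by_contra hne
  exact not_isMeagre_of_isOpen hs (nonempty_iff_ne_empty.mpr hne) h

theorem BaireMeasurableSet.isMeagre_inter_iff [BaireSpace Y] {b : Set (Set Y)}
    (hb : IsTopologicalBasis b) {S V : Set Y} (hS : BaireMeasurableSet S) (hV : IsOpen V) :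
    IsMeagre (V ∩ S) ↔ ∀ W ∈ b, W ⊆ V → W.Nonempty → ¬IsMeagre (W \ S) := by
  constructor
  · intro hVS W hW hWV hWne hWS
    refine not_isMeagre_of_isOpen (hb.isOpen hW) hWne ((hVS.union hWS).mono fun y hy => ?_)
    by_cases hyS : y ∈ S
    exacts [Or.inl ⟨hWV hy, hyS⟩, Or.inr ⟨hy, hyS⟩]
  · intro h
    obtain ⟨U, hU, hSU⟩ := hS.residualEq_isOpen
    have hSU_diff : IsMeagre {y | ¬(y ∈ S ↔ y ∈ U)} :=
      mem_of_superset hSU fun y hy hne => hne (iff_of_eq hy)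
    by_cases hVU : (V ∩ U).Nonempty
    · obtain ⟨y, hy⟩ := hVU
      obtain ⟨W, hW, hyW, hWVU⟩ := hb.exists_subset_of_mem_open hy (hV.inter hU)
      refine absurd (hSU_diff.mono ?_) (h W hW (fun z hz => (hWVU hz).1) ⟨y, hyW⟩)
      exact fun z hz hiff => hz.2 (hiff.mpr (hWVU hz.1).2)
    · refine hSU_diff.mono ?_
      rintro y ⟨hyV, hyS⟩ hiff
      exact hVU ⟨y, hyV, hiff.mp hyS⟩

theorem isOpen_setOf_inter_preimage_prodMk_nonempty {B : Set (X × Y)} (hB : IsOpen B)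
    (W : Set Y) : IsOpen {x : X | (W ∩ Prod.mk x ⁻¹' B).Nonempty} := by
  have hunion : {x : X | (W ∩ Prod.mk x ⁻¹' B).Nonempty} =
      ⋃ y ∈ W, (fun x => (x, y)) ⁻¹' B := by
    ext x; simp [Set.Nonempty]
  rw [hunion]
  exact isOpen_biUnion fun y _ => hB.preimage (by fun_prop)

theorem measurableSet_setOf_isMeagre_inter_preimage_prodMk [SecondCountableTopology Y]
    [BaireSpace Y] {B : Set (X × Y)} (hB : MeasurableSet[borel (X × Y)] B) {V : Set Y}
    (hV : IsOpen V) : MeasurableSet[borel X] {x : X | IsMeagre (V ∩ Prod.mk x ⁻¹' B)} := by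
  borelize (X × Y)
  induction B, hB using MeasurableSet.induction_on_open generalizing V with
  | isOpen U hU =>
    simp_rw [(hV.inter (hU.preimage (Continuous.prodMk_right _))).isMeagre_iff_eq_empty,
      ← not_nonempty_iff_eq_empty]
    exact (MeasurableSpace.measurableSet_generateFrom <|
      isOpen_setOf_inter_preimage_prodMk_nonempty hU V).compl
  | compl t ht iht =>
    have hb := isBasis_countableBasis Y
    have hinter : {x | IsMeagre (V ∩ Prod.mk x ⁻¹' tᶜ)} =
        ⋂ W ∈ {W ∈ countableBasis Y | W ⊆ V ∧ W.Nonempty},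
          {x | IsMeagre (W ∩ Prod.mk x ⁻¹' t)}ᶜ := by
      ext x
      have hS : BaireMeasurableSet (Prod.mk x ⁻¹' t)ᶜ := by
        borelize Y
        exact ((Continuous.prodMk_right x).borel_measurable ht).baireMeasurableSet.compl
      simp only [mem_ofPred_eq, mem_iInter, mem_compl_iff, preimage_compl, sdiff_compl,
        hS.isMeagre_inter_iff hb hV, and_imp]
    rw [hinter]
    exact .biInter ((countable_countableBasis Y).mono fun W hW => hW.1)
      fun W hW => (iht (hb.isOpen hW.1)).compl
  | iUnion f _ _ ihf =>
    have hinter : {x | IsMeagre (V ∩ Prod.mk x ⁻¹' ⋃ i, f i)} =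
        ⋂ i, {x | IsMeagre (V ∩ Prod.mk x ⁻¹' f i)} := by
      ext x
      simp only [mem_ofPred_eq, mem_iInter, preimage_iUnion, inter_iUnion]
      exact ⟨fun h i => h.mono (subset_iUnion (fun i => V ∩ Prod.mk x ⁻¹' f i) i),
        isMeagre_iUnion⟩
    rw [hinter]
    exact .iInter fun i => ihf i hV

theorem measurableSet_setOf_isMeagre_preimage_prodMk [SecondCountableTopology Y]
    [BaireSpace Y] {B : Set (X × Y)} (hB : MeasurableSet[borel (X × Y)] B) :
    MeasurableSet[borel X] {x : X | IsMeagre (Prod.mk x ⁻¹' B)} := by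
  simpa only [univ_inter] using measurableSet_setOf_isMeagre_inter_preimage_prodMk hB isOpen_univ

end

theorem borel_meagerSection_general {G : Type} [TopologicalSpace G]
    (Z : Type) [TopologicalSpace Z]
    (A : Set (Z × C(ℕ → Bool, G) × G))
    (hA : MeasurableSet[borel (Z × C(ℕ → Bool, G) × G)] A) :
    MeasurableSet[borel (Z × C(ℕ → Bool, G))]
      {p : Z × C(ℕ → Bool, G) | IsMeagre (⇑p.2 ⁻¹' {g : G | (p.1, p.2, g) ∈ A})} := by
  have heval : Continuous fun q : (Z × C(ℕ → Bool, G)) × (ℕ → Bool) =>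
      (q.1.1, q.1.2, q.1.2 q.2) := by
    fun_prop
  exact measurableSet_setOf_isMeagre_preimage_prodMk (heval.borel_measurable hA)

/-- The map `f ↦ {B ⊆ G : f⁻¹(B) is meager in 2^ℕ}` is Borel on Borel: for every Polish
space `Z` and Borel `A ⊆ Z × C(2^ℕ, G) × G`, the set of pairs `(z, f)` with
`f⁻¹(A_{z,f})` meager in `2^ℕ` is Borel. -/
theorem borel_meagerSection {G : Type} [Group G] [TopologicalSpace G]
    [IsTopologicalGroup G] [PolishSpace G] (Z : Type) [TopologicalSpace Z] [PolishSpace Z]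
    (A : Set (Z × C(ℕ → Bool, G) × G))
    (hA : MeasurableSet[borel (Z × C(ℕ → Bool, G) × G)] A) :
    MeasurableSet[borel (Z × C(ℕ → Bool, G))]
      {p : Z × C(ℕ → Bool, G) | IsMeagre (⇑p.2 ⁻¹' {g : G | (p.1, p.2, g) ∈ A})} :=
  borel_meagerSection_general Z A hA
end

section
/- Let G be a Polish group. Then there exists a partial function φ from C(2^ℕ, G) × 2^ℕ to G whose graph, viewed as a subset of C(2^ℕ, G) × 2^ℕ × G, is Borel, and such that for every f ∈ C(2^ℕ, G): (i) for every x ∈ 2^ℕ, if (f, x) is in the domain of φ then φ(f, x) ∈ f(2^ℕ); and (ii) for every set S ⊆ 2^ℕ × G that is a countable union of closed sets (i.e., F_σ) and contains the graph of φ_f := φ(f, ·), there exists x ∈ 2^ℕ such that f⁻¹(S_x) is non-meager in 2^ℕ, where S_x = {g ∈ G : (x, g) ∈ S}. -/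
/-!
Read `x : ℕ → Bool` as the matrix `(i, n) ↦ x (Nat.pair i n)` and decode it, when every row
contains a `true`, into the sequence of parities of the positions of the first `true` in each row.
The decodable `x` form a dense `G_δ` on which `decode` is continuous, so `φ (f, x) = f (decode x)`
has Borel graph. If an `F_σ` set `⋃ n, F n` contains the graph of `φ_f`, the Baire category theorem
puts all `(x, f (decode x))` with `x` decodable in a nonempty open `V` into a single closed `F n`.
Now fix a cylinder inside `V`, let `x₀` be its stem padded with `false`, and place the first `true`
of each free row far out and with prescribed parity: this produces, for every `y` in a cylinder `W`,
decodable `x ∈ V` with `decode x = y` converging to `x₀`. Hence `{x₀} × f W ⊆ F n`, and `W` is not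
meagre.
-/

open MeasureTheory Set Filter Topology

theorem measurableSet_setOf_mem_and_eq_of_continuousOn {Z X Y : Type*} [TopologicalSpace Z]
    [MeasurableSpace Z] [OpensMeasurableSpace Z] [TopologicalSpace X] [TopologicalSpace Y]
    [T2Space Y] {D : Set X} (hD : IsGδ D) {φ : X → Y} (hφ : ContinuousOn φ D) {π : Z → X}
    (hπ : Continuous π) {σ : Z → Y} (hσ : Continuous σ) :
    MeasurableSet {z | π z ∈ D ∧ σ z = φ (π z)} := by
  set Γ := {z | π z ∈ D ∧ σ z = φ (π z)}
  have hΓ : Γ = π ⁻¹' D ∩ closure Γ := by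
    refine Subset.antisymm (fun z hz => ⟨hz.1, subset_closure hz⟩) ?_
    rintro z ⟨hzD, hzΓ⟩
    have hψ : ContinuousWithinAt (fun z => (σ z, φ (π z))) Γ z :=
      hσ.continuousWithinAt.prodMk
        ((hφ _ hzD).comp hπ.continuousWithinAt fun _ hz => hz.1)
    have hΓdiag : (fun z => (σ z, φ (π z))) '' Γ ⊆ diagonal Y := by
      rintro _ ⟨z, hz, rfl⟩
      exact hz.2
    exact ⟨hzD, isClosed_diagonal.closure_subset (closure_mono hΓdiag (hψ.mem_closure_image hzΓ))⟩
  rw [hΓ]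
  exact (hD.preimage hπ).measurableSet.inter isClosed_closure.measurableSet

theorem IsGδ.exists_isOpen_mapsTo_of_continuousOn {X W ι : Type*} [TopologicalSpace X]
    [BaireSpace X] [Nonempty X] [TopologicalSpace W] [Countable ι] {D : Set X} (hD : IsGδ D)
    (hDd : Dense D) {h : X → W} (hh : ContinuousOn h D) {F : ι → Set W}
    (hF : ∀ i, IsClosed (F i)) (hcover : MapsTo h D (⋃ i, F i)) :
    ∃ i, ∃ V, IsOpen V ∧ V.Nonempty ∧ MapsTo h (V ∩ D) (F i) := by
  have hDK : D ⊆ ⋃ i, closure (D ∩ h ⁻¹' F i) := fun x hx => by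
    obtain ⟨i, hi⟩ := mem_iUnion.1 (hcover hx)
    exact mem_iUnion.2 ⟨i, subset_closure ⟨hx, hi⟩⟩
  obtain ⟨i, hi⟩ := nonempty_iUnion.1
    (hD.dense_iUnion_interior_of_closed hDd (fun _ => isClosed_closure) hDK).nonempty
  refine ⟨i, _, isOpen_interior, hi, fun x hx => ?_⟩
  have hx := ((hh x hx.2).mono inter_subset_left).mem_closure_image (interior_subset hx.1)
  exact (hF i).closure_subset
    (closure_mono ((image_mono inter_subset_right).trans (image_preimage_subset h _)) hx)

namespace ParityCode

/-- The position of the first `true` in `r` (junk value `0` if there is none). -/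
noncomputable def firstTrue (r : ℕ → Bool) : ℕ := sInf {n | r n = true}

theorem firstTrue_spec {r : ℕ → Bool} (h : ∃ n, r n = true) : r (firstTrue r) = true :=
  Nat.sInf_mem h

theorem eq_false_of_lt_firstTrue {r : ℕ → Bool} {n : ℕ} (hn : n < firstTrue r) : r n = false := by
  simpa using Nat.notMem_of_lt_sInf hn

theorem firstTrue_eq {r : ℕ → Bool} {N : ℕ} (hN : r N = true) (hlt : ∀ n < N, r n = false) :
    firstTrue r = N :=
  le_antisymm (Nat.sInf_le hN) <|
    le_csInf ⟨N, hN⟩ fun n hn => not_lt.1 fun h => by simp [hlt n h] at hn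

theorem firstTrue_congr {r r' : ℕ → Bool} (hr : ∃ n, r n = true)
    (h : ∀ n ≤ firstTrue r, r' n = r n) : firstTrue r' = firstTrue r :=
  firstTrue_eq (by rw [h _ le_rfl]; exact firstTrue_spec hr) fun n hn => by
    rw [h n hn.le]; exact eq_false_of_lt_firstTrue hn

theorem firstTrue_or_eq_left {r s : ℕ → Bool} (hr : ∃ n, r n = true)
    (hs : ∀ n ≤ firstTrue r, s n = false) : firstTrue (fun n => r n || s n) = firstTrue r :=
  firstTrue_congr hr fun n hn => by simp [hs n hn]

def decodable : Set (ℕ → Bool) := {x | ∀ i, ∃ n, x (Nat.pair i n) = true}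

noncomputable def decode (x : ℕ → Bool) (i : ℕ) : Bool :=
  (firstTrue fun n => x (Nat.pair i n)).bodd

/-- A code of `y` all of whose `true`s lie in columns `≥ 2 * m`. -/
def encode (m : ℕ) (y : ℕ → Bool) (k : ℕ) : Bool :=
  decide ((Nat.unpair k).2 = Nat.bit (y (Nat.unpair k).1) m)

@[simp]
theorem encode_pair (m : ℕ) (y : ℕ → Bool) (i n : ℕ) :
    encode m y (Nat.pair i n) = decide (n = Nat.bit (y i) m) := by
  simp [encode]

theorem le_bit (b : Bool) (m : ℕ) : m ≤ Nat.bit b m := by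
  rw [Nat.bit_val]; omega

theorem encode_eq_false_of_lt {m k : ℕ} (y : ℕ → Bool) (hk : k < m) : encode m y k = false := by
  have := Nat.unpair_right_le k
  have := le_bit (y (Nat.unpair k).1) m
  simp only [encode, decide_eq_false_iff_not]
  omega

theorem isGδ_decodable : IsGδ decodable := by
  have h : decodable = ⋂ i, ⋃ n, (fun x : ℕ → Bool => x (Nat.pair i n)) ⁻¹' {true} := by
    ext; simp [decodable]
  rw [h]
  exact .iInter fun i =>
    (isOpen_iUnion fun n => (isOpen_discrete _).preimage (continuous_apply _)).isGδ

theorem continuousAt_decode {x : ℕ → Bool} (hx : x ∈ decodable) : ContinuousAt decode x := by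
  refine continuousAt_pi.2 fun i => ?_
  set N := firstTrue fun n => x (Nat.pair i n)
  have hmono : StrictMono (Nat.pair i) := strictMono_nat_of_lt_succ fun n =>
    Nat.pair_lt_pair_right i n.lt_succ_self
  refine (continuousAt_const (y := decode x i)).congr ?_
  filter_upwards [(PiNat.isOpen_cylinder _ x (Nat.pair i N + 1)).mem_nhds
    (PiNat.self_mem_cylinder x _)] with u hu
  refine congrArg Nat.bodd (firstTrue_congr (hx i) fun n hn => ?_).symm
  exact PiNat.mem_cylinder_iff.1 hu _ (Nat.lt_succ_of_le (hmono.monotone hn))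

theorem continuousOn_decode : ContinuousOn decode decodable :=
  fun _ hx => (continuousAt_decode hx).continuousWithinAt

theorem continuousOn_apply_decode {Y : Type*} [TopologicalSpace Y] :
    ContinuousOn (fun p : C(ℕ → Bool, Y) × (ℕ → Bool) => p.1 (decode p.2))
      {p | p.2 ∈ decodable} := fun _ hp =>
  (continuous_eval.continuousAt.comp
    (continuousAt_fst.prodMk ((continuousAt_decode hp).comp continuousAt_snd))).continuousWithinAt

theorem or_encode_mem_decodable (x y : ℕ → Bool) (m : ℕ) :
    (fun k => x k || encode m y k) ∈ decodable :=
  fun i => ⟨Nat.bit (y i) m, by simp⟩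

theorem decode_or_encode {x y : ℕ → Bool} {m : ℕ} (hx : ∀ k, x k = true → k < m)
    (hy : ∀ i, (∃ n, x (Nat.pair i n) = true) → y i = decode x i) :
    decode (fun k => x k || encode m y k) = y := by
  funext i
  by_cases hi : ∃ n, x (Nat.pair i n) = true
  · have hN := hx _ (firstTrue_spec (r := fun n => x (Nat.pair i n)) hi)
    have := Nat.right_le_pair i (firstTrue fun n => x (Nat.pair i n))
    have := le_bit (y i) m
    rw [hy i hi]
    exact congrArg Nat.bodd (firstTrue_or_eq_left hi fun n hn => by
      simp only [encode_pair, decide_eq_false_iff_not]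
      omega)
  · push Not at hi
    have hfirst : (firstTrue fun n => x (Nat.pair i n) || encode m y (Nat.pair i n)) =
        Nat.bit (y i) m :=
      firstTrue_eq (by simp) fun n hn => by simp [hi n, hn.ne]
    simp only [decode, hfirst, Nat.bodd_bit]

theorem exists_forall_mem_closure_decode_fiber {V : Set (ℕ → Bool)} (hV : IsOpen V)
    (hne : V.Nonempty) : ∃ x₀ : ℕ → Bool, ∃ W : Set (ℕ → Bool), IsOpen W ∧ W.Nonempty ∧
      ∀ y ∈ W, x₀ ∈ closure (V ∩ decodable ∩ decode ⁻¹' {y}) := by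
  obtain ⟨v, hv⟩ := hne
  obtain ⟨-, ⟨c, M, rfl⟩, -, hcV⟩ :=
    (PiNat.isTopologicalBasis_cylinders _).exists_subset_of_mem_open hv hV
  set x₀ : ℕ → Bool := fun k => decide (k < M) && c k
  have hx₀ : ∀ k, x₀ k = true → k < M := fun k hk => by simp_all [x₀]
  refine ⟨x₀, PiNat.cylinder (decode x₀) M, PiNat.isOpen_cylinder _ _ _,
    ⟨_, PiNat.self_mem_cylinder _ _⟩, fun y hy => ?_⟩
  have hw : ∀ j, (fun k => x₀ k || encode (M + j) y k) ∈ V ∩ decodable ∩ decode ⁻¹' {y} := by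
    intro j
    refine ⟨⟨hcV fun k hk => ?_, or_encode_mem_decodable _ _ _⟩, decode_or_encode
      (fun k hk => by have := hx₀ k hk; omega) fun i ⟨n, hn⟩ => hy i ?_⟩
    · simp [x₀, hk, encode_eq_false_of_lt y (show k < M + j by omega)]
    · exact (Nat.left_le_pair i n).trans_lt (hx₀ _ hn)
  have hlim : Tendsto (fun j k => x₀ k || encode (M + j) y k) atTop (𝓝 x₀) :=
    tendsto_pi_nhds.2 fun k => tendsto_const_nhds.congr' <|
      (eventually_gt_atTop k).mono fun j hj => by
        simp [encode_eq_false_of_lt y (show k < M + j by omega)]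
  exact mem_closure_of_tendsto hlim (.of_forall hw)

theorem dense_decodable : Dense decodable := by
  refine dense_iff_inter_open.2 fun V hV hne => ?_
  obtain ⟨x₀, W, -, ⟨y, hy⟩, hcl⟩ := exists_forall_mem_closure_decode_fiber hV hne
  exact (closure_nonempty_iff.1 ⟨x₀, hcl y hy⟩).mono fun _ hx => hx.1

theorem exists_not_isMeagre_preimage_section {Y : Type*} [TopologicalSpace Y]
    (f : C(ℕ → Bool, Y)) {F : ℕ → Set ((ℕ → Bool) × Y)} (hF : ∀ n, IsClosed (F n))
    (hgraph : ∀ x ∈ decodable, (x, f (decode x)) ∈ ⋃ n, F n) :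
    ∃ x₀, ¬ IsMeagre (f ⁻¹' {y | (x₀, y) ∈ ⋃ n, F n}) := by
  obtain ⟨n, V, hV, hVne, hVF⟩ := isGδ_decodable.exists_isOpen_mapsTo_of_continuousOn
    dense_decodable (continuousOn_id.prodMk (f.continuous.comp_continuousOn continuousOn_decode))
    hF hgraph
  obtain ⟨x₀, W, hW, hWne, hWcl⟩ := exists_forall_mem_closure_decode_fiber hV hVne
  refine ⟨x₀, fun hmeagre => not_isMeagre_of_isOpen hW hWne
    (hmeagre.mono fun y hy => show (x₀, f y) ∈ ⋃ n, F n from mem_iUnion.2 ⟨n, ?_⟩)⟩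
  have hclosed : IsClosed ((fun u => (u, f y)) ⁻¹' F n) := (hF n).preimage (by fun_prop)
  refine hclosed.closure_subset_iff.2 ?_ (hWcl y hy)
  rintro u ⟨hu, rfl⟩
  exact hVF hu

end ParityCode

open ParityCode in
theorem exists_borel_partial_function_general {G : Type} [TopologicalSpace G]
    [PolishSpace G] :
    ∃ (D : Set (C(ℕ → Bool, G) × (ℕ → Bool))) (φ : C(ℕ → Bool, G) × (ℕ → Bool) → G),
      MeasurableSet[borel (C(ℕ → Bool, G) × (ℕ → Bool) × G)]
        {q : C(ℕ → Bool, G) × (ℕ → Bool) × G |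
          (q.1, q.2.1) ∈ D ∧ q.2.2 = φ (q.1, q.2.1)} ∧
      (∀ (f : C(ℕ → Bool, G)) (x : ℕ → Bool), (f, x) ∈ D → φ (f, x) ∈ Set.range ⇑f) ∧
      (∀ (f : C(ℕ → Bool, G)) (S : Set ((ℕ → Bool) × G)),
        (∃ F : ℕ → Set ((ℕ → Bool) × G), (∀ n, IsClosed (F n)) ∧ S = ⋃ n, F n) →
        (∀ x : ℕ → Bool, (f, x) ∈ D → (x, φ (f, x)) ∈ S) →
        ∃ x : ℕ → Bool, ¬ IsMeagre (⇑f ⁻¹' {g : G | (x, g) ∈ S})) := by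
  refine ⟨{p | p.2 ∈ decodable}, fun p => p.1 (decode p.2), ?_, fun f x _ => ⟨decode x, rfl⟩, ?_⟩
  · borelize (C(ℕ → Bool, G) × (ℕ → Bool) × G)
    exact measurableSet_setOf_mem_and_eq_of_continuousOn (isGδ_decodable.preimage continuous_snd)
      continuousOn_apply_decode (by fun_prop) (by fun_prop)
  · rintro f S ⟨F, hF, rfl⟩ hgraph
    exact exists_not_isMeagre_preimage_section f hF hgraph

/-- There is a partial function `φ` (domain `D`, values `φ`) from `C(2^ℕ, G) × 2^ℕ` to `G`
with Borel graph such that (i) its values lie in the range of the first coordinate, and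
(ii) any `F_σ` set `S ⊆ 2^ℕ × G` containing the graph of `φ_f` has a section whose
`f`-preimage is non-meager in `2^ℕ`. -/
theorem exists_borel_partial_function {G : Type} [Group G] [TopologicalSpace G]
    [IsTopologicalGroup G] [PolishSpace G] :
    ∃ (D : Set (C(ℕ → Bool, G) × (ℕ → Bool))) (φ : C(ℕ → Bool, G) × (ℕ → Bool) → G),
      MeasurableSet[borel (C(ℕ → Bool, G) × (ℕ → Bool) × G)]
        {q : C(ℕ → Bool, G) × (ℕ → Bool) × G |
          (q.1, q.2.1) ∈ D ∧ q.2.2 = φ (q.1, q.2.1)} ∧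
      (∀ (f : C(ℕ → Bool, G)) (x : ℕ → Bool), (f, x) ∈ D → φ (f, x) ∈ Set.range ⇑f) ∧
      (∀ (f : C(ℕ → Bool, G)) (S : Set ((ℕ → Bool) × G)),
        (∃ F : ℕ → Set ((ℕ → Bool) × G), (∀ n, IsClosed (F n)) ∧ S = ⋃ n, F n) →
        (∀ x : ℕ → Bool, (f, x) ∈ D → (x, φ (f, x)) ∈ S) →
        ∃ x : ℕ → Bool, ¬ IsMeagre (⇑f ⁻¹' {g : G | (x, g) ∈ S})) :=
  exists_borel_partial_function_general
end

section
/- Every compact subset of the symmetric group S∞ (the group of all permutations of ℕ with the Polish topology of pointwise convergence) satisfies the finite translation property (FTP). -/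
open MeasureTheory

/-- The Polish topology on `S∞ = Equiv.Perm ℕ`, induced by the embedding
`σ ↦ (σ, σ⁻¹)` into `ℕ^ℕ × ℕ^ℕ` (equivalently, the topology of pointwise convergence). -/
instance : TopologicalSpace (Equiv.Perm ℕ) :=
  TopologicalSpace.induced
    (fun σ : Equiv.Perm ℕ => (⇑σ, ⇑σ.symm))
    inferInstance

/-- `A` satisfies the finite translation property. -/
def SatisfiesFTP {G : Type} [Group G] [TopologicalSpace G] (A : Set G) : Prop :=
  ∀ U : Set G, IsOpen U → U.Nonempty →
    ∃ M : Set G, M.Finite ∧ M ⊆ U ∧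
      ∀ g h : G, ¬ (fun m => g * m * h) '' M ⊆ A

/-!
A basic neighbourhood of `σ` contains all `σ * ρ` with `ρ` fixing a finite set `B` pointwise.
Take `ρ` acting on the complement of `B` as the shift of `ℤ` and `M = {σ * ρ ^ j | j ≤ N}`.
If `g * M * h ⊆ K`, then every `h⁻¹ * ρ ^ j * h` lies in `K⁻¹ * K`; evaluated at a point `x`
with `h x ∉ B` these give `N + 1` distinct values. But compactness of `K` makes every
evaluation map have finite image on `K`, so `{π x | π ∈ K⁻¹ * K}` is finite, and a pigeonhole
argument lets `x` range over the fixed set `{0, …, |B|}`, whence a bound `N` independent of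
`g` and `h`.
-/

open Equiv Pointwise Topology

theorem Set.Infinite.exists_perm_injective_pow_apply {α : Type*} [Countable α] {s : Set α}
    (hs : s.Infinite) :
    ∃ ρ : Perm α, (∀ x ∉ s, ρ x = x) ∧ ∀ x ∈ s, Function.Injective fun n : ℕ => (ρ ^ n) x := by
  classical
  have := hs.to_subtype
  obtain ⟨e⟩ : Nonempty (ℤ ≃ s) := inferInstance
  refine ⟨(Equiv.addRight 1).extendDomain e,
    fun x hx => Perm.extendDomain_apply_not_subtype _ _ hx, ?_⟩
  intro x hx m n hmn
  obtain ⟨a, rfl⟩ : ∃ a, (e a : α) = x := ⟨e.symm ⟨x, hx⟩, by simp⟩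
  simp only [← Perm.extendDomain_pow, Perm.extendDomain_apply_image] at hmn
  simpa using e.injective (Subtype.coe_injective hmn)

theorem Finset.exists_mem_range_apply_notMem {α : Type*} {f : ℕ → α}
    (hf : Function.Injective f) (B : Finset α) :
    ∃ x ∈ Finset.range (B.card + 1), f x ∉ B := by
  classical
  obtain ⟨_, hy, hyB⟩ := Finset.exists_mem_notMem_of_card_lt_card (s := B)
    (t := (Finset.range (B.card + 1)).image f)
    (by rw [Finset.card_image_of_injective _ hf, Finset.card_range]; omega)
  obtain ⟨x, hx, rfl⟩ := Finset.mem_image.mp hy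
  exact ⟨x, hx, hyB⟩

theorem exists_finset_forall_eq_imp_mem_of_mem_nhds {ι β : Type*} [TopologicalSpace β]
    [DiscreteTopology β] {f : ι → β} {V : Set (ι → β)} (hV : V ∈ 𝓝 f) :
    ∃ I : Finset ι, ∀ g : ι → β, (∀ i ∈ I, g i = f i) → g ∈ V := by
  rw [nhds_pi, Filter.mem_pi'] at hV
  obtain ⟨I, t, ht, hsub⟩ := hV
  refine ⟨I, fun g hg => hsub fun i hi => ?_⟩
  rw [hg i hi]
  exact mem_of_mem_nhds (ht i)

namespace Equiv.Perm

theorem exists_finset_mul_mem_of_mem_nhds {σ : Perm ℕ} {U : Set (Perm ℕ)} (hU : U ∈ 𝓝 σ) :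
    ∃ B : Finset ℕ, ∀ ρ : Perm ℕ, (∀ i ∈ B, ρ i = i) → σ * ρ ∈ U := by
  rw [nhds_induced, Filter.mem_comap] at hU
  obtain ⟨V, hV, hVU⟩ := hU
  obtain ⟨V₁, hV₁, V₂, hV₂, hprod⟩ := mem_nhds_prod_iff.mp hV
  obtain ⟨I₁, hI₁⟩ := exists_finset_forall_eq_imp_mem_of_mem_nhds hV₁
  obtain ⟨I₂, hI₂⟩ := exists_finset_forall_eq_imp_mem_of_mem_nhds hV₂
  refine ⟨I₁ ∪ I₂.image σ.symm, fun ρ hρ => hVU (hprod ⟨hI₁ _ fun i hi => ?_, hI₂ _ fun y hy => ?_⟩)⟩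
  · simp [hρ i (Finset.mem_union_left _ hi)]
  · have hfix := hρ _ (Finset.mem_union_right _ (Finset.mem_image_of_mem σ.symm hy))
    exact ρ.symm_apply_eq.mpr hfix.symm

theorem _root_.IsCompact.finite_image_apply_inv_mul {K : Set (Perm ℕ)} (hK : IsCompact K)
    (x : ℕ) : ((fun π : Perm ℕ => π x) '' (K⁻¹ * K)).Finite := by
  have hfin : ∀ f : Perm ℕ → ℕ, Continuous f → (f '' K).Finite :=
    fun f hf => (hK.image hf).finite_of_discrete
  have hembed : Continuous fun σ : Perm ℕ => (⇑σ, ⇑σ.symm) := continuous_induced_dom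
  have happly (v : ℕ) : Continuous fun σ : Perm ℕ => σ v :=
    (continuous_apply v).comp (continuous_fst.comp hembed)
  have hsymm (v : ℕ) : Continuous fun σ : Perm ℕ => σ.symm v :=
    (continuous_apply v).comp (continuous_snd.comp hembed)
  refine ((hfin _ (happly x)).biUnion fun v _ => hfin _ (hsymm v)).subset ?_
  rintro _ ⟨_, ⟨a, ha, b, hb, rfl⟩, rfl⟩
  exact Set.mem_biUnion ⟨b, hb, rfl⟩ ⟨a⁻¹, ha, rfl⟩

theorem succ_le_ncard_of_forall_mul_pow_mul_mem {α : Type*} {K : Set (Perm α)} {x : α}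
    (hfin : ((fun π : Perm α => π x) '' (K⁻¹ * K)).Finite) {g σ ρ h : Perm α}
    (hρ : Function.Injective fun n : ℕ => (ρ ^ n) (h x)) {k : ℕ}
    (hmem : ∀ j ≤ k, g * (σ * ρ ^ j) * h ∈ K) :
    k + 1 ≤ ((fun π : Perm α => π x) '' (K⁻¹ * K)).ncard := by
  have hconj (j : ℕ) (hj : j ≤ k) : h⁻¹ * ρ ^ j * h ∈ K⁻¹ * K := by
    convert Set.mul_mem_mul (Set.inv_mem_inv.mpr (hmem 0 (Nat.zero_le k))) (hmem j hj) using 1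
    group
  calc k + 1 = (↑(Finset.range (k + 1)) : Set ℕ).ncard := by simp
    _ ≤ _ := Set.ncard_le_ncard_of_injOn (fun j => (h⁻¹ * ρ ^ j * h) x)
      (fun j hj => Set.mem_image_of_mem (fun π : Perm α => π x) (hconj j (by simpa [Nat.lt_succ_iff] using hj)))
      (fun i _ j _ hij => hρ (h⁻¹.injective hij)) hfin

end Equiv.Perm

theorem ftp_of_isCompact_perm (K : Set (Equiv.Perm ℕ)) (hK : IsCompact K) :
    SatisfiesFTP K := by
  rintro U hU ⟨σ, hσ⟩
  obtain ⟨B, hB⟩ := Perm.exists_finset_mul_mem_of_mem_nhds (hU.mem_nhds hσ)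
  obtain ⟨ρ, hρB, hρ⟩ := B.finite_toSet.infinite_compl.exists_perm_injective_pow_apply
  set N := (Finset.range (B.card + 1)).sup fun x => ((fun π : Perm ℕ => π x) '' (K⁻¹ * K)).ncard
  refine ⟨(fun j => σ * ρ ^ j) '' Set.Iic N, (Set.finite_Iic N).image _, ?_, ?_⟩
  · rintro _ ⟨j, -, rfl⟩
    exact hB _ fun i hi => Perm.pow_apply_eq_self_of_apply_eq_self (hρB i (not_not.mpr hi)) j
  · intro g h hsub
    obtain ⟨x, hx, hhx⟩ := Finset.exists_mem_range_apply_notMem h.injective B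
    have hcount := Perm.succ_le_ncard_of_forall_mul_pow_mul_mem (hK.finite_image_apply_inv_mul x)
      (hρ _ hhx) fun j hj => hsub (Set.mem_image_of_mem _ (Set.mem_image_of_mem _ hj))
    have hbound := Finset.le_sup (f := fun x => ((fun π : Perm ℕ => π x) '' (K⁻¹ * K)).ncard) hx
    omega
end

section
/- Let G be a non-locally compact Polish group which admits a compatible metric d that is translation invariant, i.e., d(g·x·h, g·y·h) = d(x, y) for all g, h, x, y ∈ G. Then every compact subset of G satisfies the finite open translation property (FOTP). -/
open MeasureTheory

/-- `A` satisfies the finite open translation property: for every nonempty open `U` there is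
a finite collection `𝓜` of nonempty open subsets of `U` such that for all `g, h` some
`V ∈ 𝓜` has `g·V·h` disjoint from `A`. -/
def SatisfiesFOTP {G : Type} [Group G] [TopologicalSpace G] (A : Set G) : Prop :=
  ∀ U : Set G, IsOpen U → U.Nonempty →
    ∃ 𝓜 : Set (Set G), 𝓜.Finite ∧ (∀ V ∈ 𝓜, IsOpen V ∧ V.Nonempty ∧ V ⊆ U) ∧
      ∀ g h : G, ∃ V ∈ 𝓜, ((fun v => g * v * h) '' V) ∩ A = ∅

/-- `A` is strongly Haar meager: there are a Borel `B ⊇ A` and a compact `K ⊆ G` such that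
`(g·B·h) ∩ K` is meager in the subspace `K` for all `g, h`. -/
def IsStronglyHaarMeager {G : Type} [Group G] [TopologicalSpace G] (A : Set G) : Prop :=
  ∃ B : Set G, MeasurableSet[borel G] B ∧ A ⊆ B ∧
    ∃ K : Set G, IsCompact K ∧
      ∀ g h : G, IsMeagre ((Subtype.val : K → G) ⁻¹' ((fun b => g * b * h) '' B))

/-!
A two-sided invariant compatible metric on a Polish group is complete: the completion is again a
group, in which `G` is a dense Gδ subgroup and hence everything. Therefore no nonempty open set is
totally bounded, for otherwise a closed ball would be compact and its translates would make `G`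
locally compact. So every nonempty open `U` contains an infinite `ε`-separated sequence `xᵢ`.
If `K` is covered by `N` balls of radius `ε/4`, let `Vᵢ = B(xᵢ, ε/4) ∩ U` for `i ≤ N`. Two-sided
translations are isometries, so points of `g Vᵢ h` and `g Vⱼ h` are `ε/2`-apart for `i ≠ j`; by
pigeonhole the `N + 1` sets `g Vᵢ h` cannot all meet `K`.
-/

open Set Filter Metric Topology TopologicalSpace
open UniformSpace (Completion)

theorem Topology.IsEmbedding.isGδ_range {X Y : Type*} [TopologicalSpace X]
    [IsCompletelyMetrizableSpace X] [MetricSpace Y] {f : X → Y} (hf : IsEmbedding f) :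
    IsGδ (range f) := by
  let := upgradeIsCompletelyMetrizable X
  -- A point of `closure (range f)` lying in every `W r` pulls back to a Cauchy filter on `X`.
  set W : ℝ → Set Y := fun r => ⋃₀ {V | IsOpen V ∧ ∃ x, f ⁻¹' V ⊆ ball x r}
  have range_subset : ∀ r > 0, range f ⊆ W r := by
    rintro r hr _ ⟨x, rfl⟩
    obtain ⟨V, hV, hVx⟩ := hf.isInducing.isOpen_iff.1 (isOpen_ball (x := x) (ε := r))
    exact ⟨V, ⟨hV, x, hVx.le⟩, show x ∈ f ⁻¹' V from hVx ▸ mem_ball_self hr⟩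
  have mem_range : ∀ y ∈ closure (range f), (∀ n : ℕ, y ∈ W (1 / (n + 1))) → y ∈ range f := by
    intro y hy hyW
    have : (comap f (𝓝 y)).NeBot := comap_neBot_iff_frequently.2 (mem_closure_iff_frequently.1 hy)
    have hcauchy : Cauchy (comap f (𝓝 y)) := by
      refine Metric.cauchy_iff.2 ⟨this, fun ε hε => ?_⟩
      obtain ⟨n, hn⟩ := exists_nat_one_div_lt (half_pos hε)
      obtain ⟨V, ⟨hV, x, hVx⟩, hyV⟩ := hyW n
      refine ⟨f ⁻¹' V, preimage_mem_comap (hV.mem_nhds hyV), fun a ha b hb => ?_⟩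
      calc dist a b ≤ dist a x + dist b x := dist_triangle_right ..
        _ < 1 / (n + 1) + 1 / (n + 1) := add_lt_add (hVx ha) (hVx hb)
        _ < ε := by linarith
    obtain ⟨x, hx⟩ := CompleteSpace.complete hcauchy
    exact ⟨x, tendsto_nhds_unique ((hf.continuous.tendsto x).mono_left hx) map_comap_le⟩
  have : range f = closure (range f) ∩ ⋂ n : ℕ, W (1 / (n + 1)) :=
    Subset.antisymm
      (subset_inter subset_closure (subset_iInter fun n => range_subset _ (by positivity)))
      fun y hy => mem_range y hy.1 (mem_iInter.1 hy.2)
  rw [this]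
  exact isClosed_closure.isGδ.inter (.iInter_of_isOpen fun n => isOpen_sUnion fun V hV => hV.1)

@[to_additive]
theorem Subgroup.eq_top_of_isGδ_of_dense {A : Type*} [Group A] [TopologicalSpace A]
    [IsTopologicalGroup A] [BaireSpace A] (S : Subgroup A) (hGδ : IsGδ (S : Set A))
    (hd : Dense (S : Set A)) : S = ⊤ := by
  refine eq_top_iff.2 fun y _ => ?_
  -- `S` and `y⁻¹ S` are dense Gδ sets, so they meet.
  obtain ⟨s, hys, hs⟩ := (Dense.inter_of_Gδ (hGδ.preimage (continuous_const_mul y)) hGδ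
    (hd.preimage (isOpenMap_mul_left y)) hd).nonempty
  simpa using S.mul_mem hys (S.inv_mem hs)

theorem completeSpace_of_isUniformAddGroup {H : Type*} [AddGroup H] [MetricSpace H]
    [IsUniformAddGroup H] [IsCompletelyMetrizableSpace H] : CompleteSpace H := by
  let ι : H →+ Completion H := Completion.toCompl
  have hι : Function.Surjective ι := AddMonoidHom.range_eq_top.1 <|
    ι.range.eq_top_of_isGδ_of_dense Completion.coe_isometry.isEmbedding.isGδ_range
      Completion.denseRange_coe
  refine (completeSpace_iff_isComplete_range (Completion.isUniformInducing_coe H)).2 ?_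
  exact hι.range_eq ▸ isComplete_univ

theorem isUniformGroup_of_isIsometricSMul {G : Type*} [Group G] [PseudoMetricSpace G]
    [IsIsometricSMul G G] [IsIsometricSMul Gᵐᵒᵖ G] : IsUniformGroup G := by
  refine ⟨(LipschitzWith.of_dist_le_mul (K := 2) fun p q => ?_).uniformContinuous⟩
  calc dist (p.1 / p.2) (q.1 / q.2)
      ≤ dist (p.1 / p.2) (q.1 / p.2) + dist (q.1 / p.2) (q.1 / q.2) := dist_triangle ..
    _ = dist p.1 q.1 + dist p.2 q.2 := by rw [dist_div_right, dist_div_left]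
    _ ≤ 2 * dist p q := by
      rw [Prod.dist_eq]; linarith [le_max_left (dist p.1 q.1) (dist p.2 q.2),
        le_max_right (dist p.1 q.1) (dist p.2 q.2)]

theorem completeSpace_of_isIsometricSMul {G : Type*} [Group G] [MetricSpace G]
    [IsCompletelyMetrizableSpace G] [IsIsometricSMul G G] [IsIsometricSMul Gᵐᵒᵖ G] :
    CompleteSpace G :=
  -- The completion of a uniform group is a group only in additive notation in Mathlib.
  have : IsUniformAddGroup (Additive G) :=
    ⟨(isUniformGroup_of_isIsometricSMul (G := G)).uniformContinuous_div⟩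
  have : IsCompletelyMetrizableSpace (Additive G) := ‹IsCompletelyMetrizableSpace G›
  completeSpace_of_isUniformAddGroup (H := Additive G)

theorem locallyCompactSpace_of_totallyBounded {G : Type*} [Group G] [MetricSpace G]
    [CompleteSpace G] [IsIsometricSMul G G] {U : Set G} (hU : IsOpen U) (hne : U.Nonempty)
    (htb : TotallyBounded U) : LocallyCompactSpace G := by
  obtain ⟨u, hu⟩ := hne
  obtain ⟨r, hr, hrU⟩ := isOpen_iff.1 hU u hu
  have hu_compact : IsCompact (closedBall u (r / 2)) :=
    (htb.subset ((closedBall_subset_ball (half_lt_self hr)).trans hrU)).isCompact_of_isClosed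
      isClosed_closedBall
  have : WeaklyLocallyCompactSpace G := ⟨fun x => ⟨closedBall x (r / 2), by
    simpa [Metric.smul_closedBall] using hu_compact.smul (x * u⁻¹),
    closedBall_mem_nhds x (half_pos hr)⟩⟩
  infer_instance

theorem exists_seq_pairwise_le_dist_of_not_totallyBounded {X : Type*} [PseudoMetricSpace X]
    {s : Set X} (hs : ¬TotallyBounded s) :
    ∃ ε > 0, ∃ x : ℕ → X, (∀ n, x n ∈ s) ∧ Pairwise fun m n => ε ≤ dist (x m) (x n) := by
  obtain ⟨ε, hε, hcover⟩ : ∃ ε > 0, ∀ t : Set X, t.Finite → ¬s ⊆ ⋃ y ∈ t, ball y ε := by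
    simpa [Metric.totallyBounded_iff] using hs
  have : Std.Symm fun x y : X => ε ≤ dist x y := ⟨fun x y h => dist_comm x y ▸ h⟩
  refine ⟨ε, hε, exists_seq_of_forall_finset_exists' (· ∈ s) (fun x y => ε ≤ dist x y)
    fun t _ => ?_⟩
  obtain ⟨y, hys, hy⟩ := not_subset.1 (hcover t t.finite_toSet)
  exact ⟨y, hys, fun x hx => not_lt.1 fun h => hy (mem_biUnion hx (mem_ball'.2 h))⟩

theorem TotallyBounded.exists_le_of_pairwise_le_dist {X : Type*} [PseudoMetricSpace X]
    {K : Set X} (hK : TotallyBounded K) {ε : ℝ} (hε : 0 < ε) :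
    ∃ n : ℕ, ∀ m (y : Fin m → X), (∀ i, y i ∈ K) →
      (Pairwise fun i j => ε ≤ dist (y i) (y j)) → m ≤ n := by
  obtain ⟨t, ht, hKt⟩ := Metric.totallyBounded_iff.1 hK (ε / 2) (half_pos hε)
  refine ⟨ht.toFinset.card, fun m y hyK hy => ?_⟩
  have hcenter : ∀ i, ∃ c ∈ t, dist (y i) c < ε / 2 := fun i => by
    simpa using hKt (hyK i)
  choose c hct hyc using hcenter
  by_contra! hlt
  obtain ⟨i, -, j, -, hij, hcij⟩ := Finset.exists_ne_map_eq_of_card_lt_of_maps_to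
    (s := Finset.univ) (t := ht.toFinset) (by simpa using hlt) fun i _ => ht.mem_toFinset.2 (hct i)
  linarith [hy hij, hyc i, hcij ▸ hyc j, dist_triangle_right (y i) (y j) (c i)]

theorem satisfiesFOTP_of_totallyBounded {G : Type} [Group G] [PseudoMetricSpace G]
    [IsIsometricSMul G G] [IsIsometricSMul Gᵐᵒᵖ G]
    (hG : ∀ U : Set G, IsOpen U → U.Nonempty → ¬TotallyBounded U) {K : Set G}
    (hK : TotallyBounded K) : SatisfiesFOTP K := by
  intro U hU hne
  obtain ⟨ε, hε, x, hxU, hx⟩ := exists_seq_pairwise_le_dist_of_not_totallyBounded (hG U hU hne)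
  obtain ⟨n, hn⟩ := hK.exists_le_of_pairwise_le_dist (half_pos hε)
  set V : ℕ → Set G := fun i => ball (x i) (ε / 4) ∩ U
  refine ⟨V '' Iic n, (finite_Iic n).image V, ?_, fun g h => ?_⟩
  · rintro _ ⟨i, -, rfl⟩
    exact ⟨isOpen_ball.inter hU, ⟨x i, mem_ball_self (by positivity), hxU i⟩, inter_subset_right⟩
  by_contra! hmeet
  have hv : ∀ i : Fin (n + 1), ∃ v ∈ V i, g * v * h ∈ K := fun i => by
    obtain ⟨_, ⟨v, hv, rfl⟩, hvK⟩ := hmeet _ ⟨i, Nat.lt_succ_iff.1 i.2, rfl⟩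
    exact ⟨v, hv, hvK⟩
  choose v hvV hvK using hv
  have hsep : Pairwise fun i j : Fin (n + 1) => ε / 2 ≤ dist (g * v i * h) (g * v j * h) := by
    intro i j hij
    rw [dist_mul_right, dist_mul_left]
    have hvi : dist (v i) (x i) < ε / 4 := (hvV i).1
    have hvj : dist (v j) (x j) < ε / 4 := (hvV j).1
    linarith [hx (Fin.val_injective.ne hij), dist_triangle4 (x i) (v i) (v j) (x j),
      dist_comm (x i) (v i)]
  exact (hn _ _ hvK hsep).not_gt (Nat.lt_succ_self n)

theorem fotp_of_isCompact_of_invariant_metric_general {G : Type} [Group G] [MetricSpace G]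
    [PolishSpace G] (hG : ¬ LocallyCompactSpace G)
    (hinv : ∀ g h x y : G, dist (g * x * h) (g * y * h) = dist x y)
    (K : Set G) (hK : IsCompact K) :
    SatisfiesFOTP K := by
  have : IsIsometricSMul G G := ⟨fun g => .of_dist_eq fun x y => by simpa using hinv g 1 x y⟩
  have : IsIsometricSMul Gᵐᵒᵖ G :=
    ⟨fun g => .of_dist_eq fun x y => by simpa using hinv 1 g.unop x y⟩
  have : CompleteSpace G := completeSpace_of_isIsometricSMul
  exact satisfiesFOTP_of_totallyBounded
    (fun U hU hne htb => hG (locallyCompactSpace_of_totallyBounded hU hne htb)) hK.totallyBounded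

theorem fotp_of_isCompact_of_invariant_metric {G : Type} [Group G] [MetricSpace G]
    [IsTopologicalGroup G] [PolishSpace G] (hG : ¬ LocallyCompactSpace G)
    (hinv : ∀ g h x y : G, dist (g * x * h) (g * y * h) = dist x y)
    (K : Set G) (hK : IsCompact K) :
    SatisfiesFOTP K :=
  fotp_of_isCompact_of_invariant_metric_general hG hinv K hK
end

section
/- Let X be a separable reflexive Banach space (i.e., a separable Banach space for which the canonical isometric embedding into the continuous double dual is surjective). Then every bounded, convex, nowhere dense subset A ⊆ X satisfies the finite translation property (FTP): for every nonempty open set U ⊆ X there exists a finite set M ⊆ U such that for all g ∈ X one has M + g ⊄ A. -/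
/-!
In a reflexive space the closure `C` of a bounded convex set is weakly compact. If every finite
subset of an open set `U` had a translate inside `A ⊆ C`, the weakly closed sets
`{g | u + g ∈ C}`, `u ∈ U`, would have the finite intersection property inside the weakly compact
set `C - u₀`; a common point `g` gives `U + g ⊆ C`, so `C` would have nonempty interior.
-/

theorem IsCompact.exists_forall_add_mem {Y ι : Type*} [AddGroup Y] [TopologicalSpace Y]
    [ContinuousAdd Y] [T2Space Y] {K : Set Y} (hK : IsCompact K) (p : ι → Y)
    (h : ∀ u : Finset ι, ∃ g, ∀ i ∈ u, p i + g ∈ K) : ∃ g, ∀ i, p i + g ∈ K := by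
  classical
  cases isEmpty_or_nonempty ι with
  | inl _ => exact ⟨0, isEmptyElim⟩
  | inr hι =>
    obtain ⟨i₀⟩ := hι
    let t : ι → Set Y := fun i => (p i + ·) ⁻¹' K
    have ht_closed : ∀ i, IsClosed (t i) := fun i =>
      hK.isClosed.preimage (continuous_const_add (p i))
    have ht_compact : IsCompact (t i₀) := (Homeomorph.addLeft (p i₀)).isCompact_preimage.2 hK
    have hfip : ∀ u : Finset ι, (t i₀ ∩ ⋂ i ∈ u, t i).Nonempty := fun u => by
      obtain ⟨g, hg⟩ := h (insert i₀ u)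
      exact ⟨g, hg i₀ (Finset.mem_insert_self _ _), Set.mem_iInter₂.2 fun i hi =>
        hg i (Finset.mem_insert_of_mem hi)⟩
    obtain ⟨g, -, hg⟩ := ht_compact.inter_iInter_nonempty t ht_closed hfip
    exact ⟨g, Set.mem_iInter.1 hg⟩

namespace NormedSpace

variable {X : Type*} [NormedAddCommGroup X] [NormedSpace ℝ X]

theorem surjective_inclusionInDoubleDualWeak
    (hrefl : Function.Surjective (inclusionInDoubleDual ℝ X)) :
    Function.Surjective (inclusionInDoubleDualWeak ℝ X) := fun y => by
  obtain ⟨x, hx⟩ := hrefl (StrongDual.toWeakDual.symm y)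
  exact ⟨toWeakSpace ℝ X x, DFunLike.ext _ _ fun f => DFunLike.congr_fun hx f⟩

theorem isCompact_toWeakSpace_closure
    (hrefl : Function.Surjective (inclusionInDoubleDual ℝ X))
    {A : Set X} (hbdd : Bornology.IsBounded A) (hconv : Convex ℝ A) :
    IsCompact (toWeakSpace ℝ X '' closure A) := by
  rw [hconv.toWeakSpace_closure ℝ]
  refine isCompact_closure_of_isBounded ℝ X _ ?_ ?_
  · rwa [(toWeakSpace ℝ X).injective.preimage_image]
  · simp [(surjective_inclusionInDoubleDualWeak hrefl).range_eq]

theorem exists_add_image_subset_closure_of_forall_finite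
    (hrefl : Function.Surjective (inclusionInDoubleDual ℝ X))
    {A : Set X} (hbdd : Bornology.IsBounded A) (hconv : Convex ℝ A) {S : Set X}
    (h : ∀ M : Set X, M.Finite → M ⊆ S → ∃ g, (· + g) '' M ⊆ A) :
    ∃ g, (· + g) '' S ⊆ closure A := by
  classical
  obtain ⟨g, hg⟩ := (isCompact_toWeakSpace_closure hrefl hbdd hconv).exists_forall_add_mem
    (fun s : S => toWeakSpace ℝ X s) fun u => by
      obtain ⟨g, hg⟩ := h (u.image Subtype.val) (Finset.finite_toSet _) (by simp)
      refine ⟨toWeakSpace ℝ X g, fun s hs => ⟨s + g, subset_closure (hg ⟨s, by simpa, rfl⟩), ?_⟩⟩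
      simp
  refine ⟨(toWeakSpace ℝ X).symm g, ?_⟩
  rintro - ⟨s, hs, rfl⟩
  simpa [LinearEquiv.image_eq_preimage_symm] using hg ⟨s, hs⟩

end NormedSpace

theorem ftp_of_bounded_convex_nowhereDense_general {X : Type} [NormedAddCommGroup X]
    [NormedSpace ℝ X]
    (hrefl : Function.Surjective ⇑(NormedSpace.inclusionInDoubleDual ℝ X))
    (A : Set X) (hbdd : Bornology.IsBounded A) (hconv : Convex ℝ A)
    (hnwd : IsNowhereDense A) :
    ∀ U : Set X, IsOpen U → U.Nonempty →
      ∃ M : Set X, M.Finite ∧ M ⊆ U ∧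
        ∀ g : X, ¬ (fun m => m + g) '' M ⊆ A := by
  intro U hU ⟨x, hx⟩
  by_contra! hcon
  obtain ⟨g, hg⟩ :=
    NormedSpace.exists_add_image_subset_closure_of_forall_finite hrefl hbdd hconv hcon
  have hint : x + g ∈ interior (closure A) :=
    interior_maximal hg (isOpenMap_add_right g U hU) ⟨x, hx, rfl⟩
  rwa [hnwd] at hint

theorem ftp_of_bounded_convex_nowhereDense {X : Type} [NormedAddCommGroup X]
    [NormedSpace ℝ X] [CompleteSpace X] [TopologicalSpace.SeparableSpace X]
    (hrefl : Function.Surjective ⇑(NormedSpace.inclusionInDoubleDual ℝ X))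
    (A : Set X) (hbdd : Bornology.IsBounded A) (hconv : Convex ℝ A)
    (hnwd : IsNowhereDense A) :
    ∀ U : Set X, IsOpen U → U.Nonempty →
      ∃ M : Set X, M.Finite ∧ M ⊆ U ∧
        ∀ g : X, ¬ (fun m => m + g) '' M ⊆ A :=
  ftp_of_bounded_convex_nowhereDense_general hrefl A hbdd hconv hnwd
end

section
/- Let X be a separable reflexive Banach space (i.e., a separable Banach space for which the canonical isometric embedding into the continuous double dual is surjective). Then every convex, nowhere dense subset of X is Haar meager. -/
open MeasureTheory

/-- `A ⊆ G` is Haar meager: there are a Borel `B ⊇ A`, a nonempty compact metric space `K`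
and a continuous `f : K → G` with `f⁻¹(B + g)` meager in `K` for every `g`. -/
def IsHaarMeagerAdd {G : Type} [AddGroup G] [TopologicalSpace G] (A : Set G) : Prop :=
  ∃ B : Set G, MeasurableSet[borel G] B ∧ A ⊆ B ∧
    ∃ (K : Type) (_ : MetricSpace K) (_ : CompactSpace K) (_ : Nonempty K) (f : K → G),
      Continuous f ∧ ∀ g : G, IsMeagre (f ⁻¹' ((fun b => b + g) '' B))

/-!
In a reflexive space bounded closed convex sets are weakly compact, so a decreasing sequence of
nonempty ones has nonempty intersection. Applied to `{g ∈ closedBall 0 R | v j + g ∈ C, j ≤ n}`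
with `(v j)` dense in `closedBall 0 ε`, this shows that if `C` is closed, convex and has empty
interior, then finitely many vectors `y` of norm `≤ ε` already push every `g ∈ closedBall 0 R`
out of `C`, in the sense that some `y + g ∉ C`. Take such finite sets `F k` for `ε = 2⁻ᵏ` and
`R = k`, and let `f t = ∑ k, t k` on the compact product `∏ k, F k`. The preimage under `f` of
a translate of `C` is closed, and it has empty interior because a basic open set constrains only
finitely many coordinates: a free coordinate `k` of large index moves `f t` out of the translate.
-/

open Set Filter Topology Metric

section Reflexive

variable {X : Type*} [NormedAddCommGroup X] [NormedSpace ℝ X]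

theorem nonempty_iInter_of_antitone_of_isClosed_of_convex
    (hrefl : Function.Surjective (NormedSpace.inclusionInDoubleDual ℝ X)) {D : ℕ → Set X}
    (hD : Antitone D) (hne : ∀ n, (D n).Nonempty) (hcl : ∀ n, IsClosed (D n))
    (hconv : ∀ n, Convex ℝ (D n)) (hbdd : Bornology.IsBounded (D 0)) :
    (⋂ n, D n).Nonempty := by
  -- Banach–Alaoglu: the weak-* closures of the images of `D n` in the bidual are compact
  obtain ⟨R, hR⟩ := isBounded_iff_forall_norm_le.1 hbdd
  let q : X → WeakDual ℝ (StrongDual ℝ X) := fun x =>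
    StrongDual.toWeakDual (NormedSpace.inclusionInDoubleDual ℝ X x)
  let E : ℕ → Set (WeakDual ℝ (StrongDual ℝ X)) := fun n => closure (q '' D n)
  have hE_ball : ∀ n, E n ⊆ WeakDual.toStrongDual ⁻¹' closedBall 0 R := by
    refine fun n => closure_minimal ?_ (WeakDual.isClosed_closedBall 0 R)
    rintro _ ⟨x, hx, rfl⟩
    exact (mem_closedBall_zero_iff (E := StrongDual ℝ (StrongDual ℝ X))).2 <|
      (NormedSpace.double_dual_bound ℝ X x).trans (hR x (hD n.zero_le hx))
  obtain ⟨Φ, hΦ⟩ := IsCompact.nonempty_iInter_of_directed_nonempty_isCompact_isClosed E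
    (fun m n => ⟨max m n, closure_mono (image_mono (hD (le_max_left m n))),
      closure_mono (image_mono (hD (le_max_right m n)))⟩)
    (fun n => ((hne n).image q).closure)
    (fun n => (WeakDual.isCompact_closedBall 0 R).of_isClosed_subset isClosed_closure (hE_ball n))
    (fun n => isClosed_closure)
  obtain ⟨g, hg⟩ := hrefl (WeakDual.toStrongDual Φ)
  refine ⟨g, mem_iInter.2 fun n => by_contra fun hgD => ?_⟩
  obtain ⟨φ, u, hφD, hφg⟩ := geometric_hahn_banach_closed_point (hconv n) (hcl n) hgD
  have hΦφ : Φ φ ≤ u := by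
    refine closure_minimal ?_ (isClosed_le (WeakDual.eval_continuous φ) continuous_const)
      (mem_iInter.1 hΦ n)
    rintro _ ⟨x, hx, rfl⟩
    exact (hφD x hx).le
  have : Φ φ = φ g := congrArg (· φ) hg.symm
  linarith

theorem exists_finset_forall_add_notMem [TopologicalSpace.SeparableSpace X]
    (hrefl : Function.Surjective (NormedSpace.inclusionInDoubleDual ℝ X)) {C : Set X}
    (hC : IsClosed C) (hconv : Convex ℝ C) (hint : interior C = ∅) {ε : ℝ} (hε : 0 < ε)
    (R : ℝ) :
    ∃ F : Finset X, 0 ∈ F ∧ (∀ y ∈ F, ‖y‖ ≤ ε) ∧ ∀ g, ‖g‖ ≤ R → ∃ y ∈ F, y + g ∉ C := by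
  classical
  obtain ⟨T, hT_ball, hT_count, hball_T⟩ := (TopologicalSpace.IsSeparable.of_separableSpace
    (closedBall (0 : X) ε)).exists_countable_dense_subset
  obtain ⟨v, hv⟩ := (hT_count.insert 0).exists_eq_range (insert_nonempty 0 T)
  have hv_norm : ∀ j, ‖v j‖ ≤ ε := fun j => by
    have : v j ∈ insert 0 T := hv ▸ mem_range_self j
    exact mem_closedBall_zero_iff.1 (insert_subset (mem_closedBall_self hε.le) hT_ball this)
  by_contra! h
  let D : ℕ → Set X := fun n => closedBall 0 R ∩ ⋂ j ∈ Iic n, (v j + ·) ⁻¹' C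
  have hne : ∀ n, (D n).Nonempty := fun n => by
    obtain ⟨g, hgR, hgC⟩ := h (insert 0 ((Finset.Iic n).image v)) (by simp)
      (by simp [hε.le, hv_norm])
    exact ⟨g, mem_closedBall_zero_iff.2 hgR, mem_iInter₂.2 fun j hj =>
      hgC _ (Finset.mem_insert_of_mem (Finset.mem_image_of_mem v (Finset.mem_Iic.2 hj)))⟩
  obtain ⟨g, hg⟩ := nonempty_iInter_of_antitone_of_isClosed_of_convex hrefl
    (fun m n hmn => inter_subset_inter_right _
      (biInter_subset_biInter_left (Iic_subset_Iic.2 hmn))) hne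
    (fun n => isClosed_closedBall.inter
      (isClosed_biInter fun j _ => hC.preimage (continuous_const.add continuous_id)))
    (fun n => (convex_closedBall 0 R).inter
      (convex_iInter₂ fun j _ => hconv.translate_preimage_right (v j)))
    (isBounded_closedBall.subset inter_subset_left)
  have hgC : MapsTo (· + g) (range v) C := by
    rintro _ ⟨j, rfl⟩
    exact mem_iInter₂.1 (mem_iInter.1 hg j).2 j (mem_Iic.2 le_rfl)
  have hball : ball g ε ⊆ C := fun x hx => by
    have hx' : x - g ∈ closure (range v) :=
      closure_mono (hv ▸ subset_insert 0 T) (hball_T (mem_closedBall_zero_iff.2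
        (mem_ball_iff_norm.1 hx).le))
    simpa [hC.closure_eq] using hgC.closure (continuous_add_const g) hx'
  exact hint.subset (interior_maximal hball isOpen_ball (mem_ball_self hε))

end Reflexive

section CoordSum

variable {X : Type*} [NormedAddCommGroup X]

noncomputable def coordSum (F : ℕ → Set X) (t : ∀ k, F k) : X := ∑' k, (t k : X)

variable {F : ℕ → Set X}

theorem continuous_coordSum [CompleteSpace X] {ε : ℕ → ℝ} (hε : Summable ε)
    (hF : ∀ k, ∀ y ∈ F k, ‖y‖ ≤ ε k) : Continuous (coordSum F) :=
  continuous_tsum (fun k => continuous_subtype_val.comp (continuous_apply k)) hε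
    fun k t => hF k _ (t k).2

theorem exists_eqOn_coordSum_eq (h0 : ∀ k, (0 : X) ∈ F k) (t₀ : ∀ k, F k) {I : Finset ℕ}
    {k₀ : ℕ} (hk₀ : k₀ ∉ I) {y : X} (hy : y ∈ F k₀) :
    ∃ t : ∀ k, F k, (∀ k ∈ I, t k = t₀ k) ∧ coordSum F t = y + ∑ k ∈ I, (t₀ k : X) := by
  classical
  let t : ∀ k, F k := fun k =>
    if k ∈ I then t₀ k else if hk : k = k₀ then ⟨y, hk ▸ hy⟩ else ⟨0, h0 k⟩
  refine ⟨t, fun k hk => if_pos hk, ?_⟩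
  have hsupp : ∀ k ∉ insert k₀ I, (t k : X) = 0 := fun k hk => by
    rw [Finset.mem_insert, not_or] at hk
    simp [t, hk.1, hk.2]
  rw [coordSum, tsum_eq_sum hsupp, Finset.sum_insert hk₀]
  congr 1
  · simp [t, hk₀]
  · exact Finset.sum_congr rfl fun k hk => by simp [t, hk]

theorem isNowhereDense_preimage_coordSum (h0 : ∀ k, (0 : X) ∈ F k)
    (hcont : Continuous (coordSum F)) {B : Set X} (hB : IsClosed B)
    (hesc : ∀ w, ∃ᶠ k in cofinite, ∃ y ∈ F k, y + w ∉ B) :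
    IsNowhereDense (coordSum F ⁻¹' B) := by
  refine (hB.preimage hcont).isNowhereDense_iff.2 (eq_empty_of_forall_notMem fun t₀ ht₀ => ?_)
  rw [mem_interior_iff_mem_nhds, nhds_pi, mem_pi'] at ht₀
  obtain ⟨I, V, hV, hIV⟩ := ht₀
  obtain ⟨k₀, ⟨y, hyF, hyB⟩, hk₀⟩ :=
    ((hesc (∑ k ∈ I, (t₀ k : X))).and_eventually I.eventually_cofinite_notMem).exists
  obtain ⟨t, ht_eq, ht_sum⟩ := exists_eqOn_coordSum_eq h0 t₀ hk₀ hyF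
  have ht_mem : t ∈ (I : Set ℕ).pi V := fun k hk => ht_eq k hk ▸ mem_of_mem_nhds (hV k)
  exact hyB (ht_sum ▸ hIV ht_mem)

end CoordSum

theorem haarMeager_of_convex_nowhereDense {X : Type} [NormedAddCommGroup X]
    [NormedSpace ℝ X] [CompleteSpace X] [TopologicalSpace.SeparableSpace X]
    (hrefl : Function.Surjective ⇑(NormedSpace.inclusionInDoubleDual ℝ X))
    (A : Set X) (hconv : Convex ℝ A) (hnwd : IsNowhereDense A) :
    IsHaarMeagerAdd A := by
  choose F hF0 hFε hFesc using fun k : ℕ =>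
    exists_finset_forall_add_notMem hrefl isClosed_closure hconv.closure hnwd
      (pow_pos one_half_pos k) k
  have hcont : Continuous (coordSum fun k => (F k : Set X)) :=
    continuous_coordSum summable_geometric_two hFε
  refine ⟨closure A,
    (MeasurableSpace.measurableSet_generateFrom isClosed_closure.isOpen_compl).of_compl,
    subset_closure, ∀ k, (F k : Set X), TopologicalSpace.metrizableSpaceMetric _, inferInstance,
    ⟨fun k => ⟨0, hF0 k⟩⟩, _, hcont, fun g => ?_⟩
  rw [image_add_right]
  refine (isNowhereDense_preimage_coordSum hF0 hcont
    (isClosed_closure.preimage (continuous_add_const (-g))) fun w => ?_).isMeagre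
  refine Eventually.frequently ?_
  rw [Nat.cofinite_eq_atTop]
  filter_upwards [eventually_ge_atTop ⌈‖w - g‖⌉₊] with k hk
  obtain ⟨y, hyF, hyA⟩ := hFesc k (w - g) (Nat.ceil_le.1 hk)
  exact ⟨y, hyF, by simpa [sub_eq_add_neg, add_assoc] using hyA⟩
end
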